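/- arXiv:2302.07773 — 2 statements merged into one kernel-verified Lean document; each statement's English description precedes it below -/
import Mathlib

section
/- Boundary-value solvability and value of the variance-modulated moment problem: Let d ≥ 1, m₀, m₁ ∈ ℝ^d with n := |m₁ − m₀| > 0, and σ₀, σ₁ > 0. Then there exist β > 0, t₀ ∈ ℝ and α ∈ ℝ^d with α ≠ 0 such that the curves m(t) := m₀ + (α/|α|²) β (tanh(β t + t₀) − tanh(t₀)) and σ(t) := β / (|α| cosh(β t + t₀)) satisfy m(0) = m₀, m(1) = m₁, σ(0) = σ₀, σ(1) = σ₁, and moreover β = | log( (n² + σ₀² + σ₁² − √((n² + σ₀² + σ₁²)² − 4 σ₀² σ₁²)) / (2 σ₀ σ₁) ) |; in particular the action of this curve equals ½ β² = ½ | log( (n² + σ₀² + σ₁² − √((n² + σ₀² + σ₁²)² − 4 σ₀² σ₁²)) / (2 σ₀ σ₁) ) |². -/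
/-!
With n = ‖m₁ - m₀‖ and α a positive multiple of m₁ - m₀, the endpoint conditions at t = 1 and σ(0) = σ₀ become
cosh β = (n² + σ₀² + σ₁²) / (2 σ₀ σ₁), cosh t₀ = σ₁ sinh β / n, cosh (β + t₀) = σ₀ sinh β / n and
‖α‖ = β n / (σ₀ σ₁ sinh β); the condition on m(1) reduces to these through
tanh (β + t₀) - tanh t₀ = sinh β / (cosh t₀ cosh (β + t₀)). The argument r of the logarithm in the
formula is the root in (0, 1) of r + r⁻¹ = 2 cosh β, so |log r| = β.
-/

open Real

namespace Real

theorem sub_sqrt_sq_sub_sq_mem_Ioo {P S : ℝ} (hP : 0 < P) (hPS : P < S) :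
    S - √(S ^ 2 - P ^ 2) ∈ Set.Ioo 0 P := by
  constructor
  · exact sub_pos.mpr ((sqrt_lt' (by linarith)).mpr (by nlinarith))
  · exact sub_lt_comm.mp ((lt_sqrt (by linarith)).mpr (by nlinarith))

theorem cosh_abs_log_sub_sqrt {P S : ℝ} (hP : 0 < P) (hPS : P < S) :
    cosh |log ((S - √(S ^ 2 - P ^ 2)) / P)| = S / P := by
  have hD := sq_sqrt (show 0 ≤ S ^ 2 - P ^ 2 by nlinarith)
  have hpos := (sub_sqrt_sq_sub_sq_mem_Ioo hP hPS).1
  rw [cosh_abs, cosh_log (div_pos hpos hP)]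
  field_simp
  linear_combination hD

theorem abs_log_sub_sqrt_pos {P S : ℝ} (hP : 0 < P) (hPS : P < S) :
    0 < |log ((S - √(S ^ 2 - P ^ 2)) / P)| := by
  obtain ⟨hpos, hlt⟩ := sub_sqrt_sq_sub_sq_mem_Ioo hP hPS
  exact abs_pos.mpr (log_neg (div_pos hpos hP) ((div_lt_one hP).mpr hlt)).ne

theorem tanh_add_sub_tanh (x y : ℝ) :
    tanh (x + y) - tanh y = sinh x / (cosh y * cosh (x + y)) := by
  have hy := (cosh_pos y).ne'
  have hxy := (cosh_pos (x + y)).ne'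
  rw [tanh_eq_sinh_div_cosh, tanh_eq_sinh_div_cosh, div_sub_div _ _ hxy hy,
    show x = (x + y) - y by ring, sinh_sub]
  simp only [add_sub_cancel_right]
  ring

theorem exists_cosh_eq_and_cosh_add_eq {β p q : ℝ} (hβ : β ≠ 0) (hp : 0 < p)
    (h : 2 * p * q * cosh β - p ^ 2 - q ^ 2 = sinh β ^ 2) :
    ∃ t, cosh t = p ∧ cosh (β + t) = q := by
  have hs : sinh β ≠ 0 := sinh_ne_zero.mpr hβ
  -- forced by expanding cosh (β + t) = q once cosh t = p
  set t := arsinh ((q - p * cosh β) / sinh β)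
  have hsinh : sinh t = (q - p * cosh β) / sinh β := sinh_arsinh _
  have hcosh : cosh t = p := by
    have : 1 + ((q - p * cosh β) / sinh β) ^ 2 = p ^ 2 := by
      field_simp
      linear_combination p ^ 2 * cosh_sq β - h
    rw [cosh_arsinh, this, sqrt_sq hp.le]
  refine ⟨t, hcosh, ?_⟩
  rw [cosh_add, hcosh, hsinh]
  field_simp
  ring

end Real

section

variable {E : Type*} [NormedAddCommGroup E] [NormedSpace ℝ E]

noncomputable def momentCurve (m₀ α : E) (β t₀ t : ℝ) : E :=
  m₀ + ((β * (tanh (β * t + t₀) - tanh t₀)) / ‖α‖ ^ 2) • α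

noncomputable def varianceCurve (α : E) (β t₀ t : ℝ) : ℝ :=
  β / (‖α‖ * cosh (β * t + t₀))

theorem momentCurve_zero (m₀ α : E) (β t₀ : ℝ) : momentCurve m₀ α β t₀ 0 = m₀ := by
  simp [momentCurve]

theorem exists_curves_through_endpoints {m₀ m₁ : E} (hn : 0 < ‖m₁ - m₀‖) {σ₀ σ₁ β : ℝ}
    (hσ₀ : 0 < σ₀) (hσ₁ : 0 < σ₁) (hβ : 0 < β)
    (hcosh : 2 * σ₀ * σ₁ * cosh β = ‖m₁ - m₀‖ ^ 2 + σ₀ ^ 2 + σ₁ ^ 2) :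
    ∃ (t₀ : ℝ) (α : E), α ≠ 0 ∧ momentCurve m₀ α β t₀ 1 = m₁ ∧
      varianceCurve α β t₀ 0 = σ₀ ∧ varianceCurve α β t₀ 1 = σ₁ := by
  set n := ‖m₁ - m₀‖
  have hs : 0 < sinh β := sinh_pos_iff.mpr hβ
  have hpq : 2 * (σ₁ * sinh β / n) * (σ₀ * sinh β / n) * cosh β - (σ₁ * sinh β / n) ^ 2
      - (σ₀ * sinh β / n) ^ 2 = sinh β ^ 2 := by
    field_simp
    linear_combination hcosh
  obtain ⟨t₀, h₀, h₁⟩ := exists_cosh_eq_and_cosh_add_eq hβ.ne' (by positivity) hpq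
  set L := β * n / (σ₀ * σ₁ * sinh β) with hL_def
  have hL : 0 < L := by positivity
  have hnorm : ‖(L / n) • (m₁ - m₀)‖ = L := by
    rw [norm_smul, norm_div, norm_of_nonneg hL.le, norm_norm, div_mul_cancel₀ _ hn.ne']
  refine ⟨t₀, (L / n) • (m₁ - m₀), by rw [← norm_pos_iff, hnorm]; exact hL, ?_, ?_, ?_⟩
  · have hcoeff : β * (tanh (β * 1 + t₀) - tanh t₀) / L ^ 2 * (L / n) = 1 := by
      rw [mul_one, tanh_add_sub_tanh, h₀, h₁, hL_def]
      field_simp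
    rw [momentCurve, hnorm, smul_smul, hcoeff, one_smul, add_sub_cancel]
  · rw [varianceCurve, hnorm, mul_zero, zero_add, h₀, hL_def]
    field_simp
  · rw [varianceCurve, hnorm, mul_one, h₁, hL_def]
    field_simp

end

theorem stmt2_general (d : ℕ) (m₀ m₁ : EuclideanSpace ℝ (Fin d))
    (hn : 0 < ‖m₁ - m₀‖) (σ₀ σ₁ : ℝ) (hσ₀ : 0 < σ₀) (hσ₁ : 0 < σ₁) :
    ∃ (β t₀ : ℝ) (α : EuclideanSpace ℝ (Fin d)), 0 < β ∧ α ≠ 0 ∧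
      (∀ (m : ℝ → EuclideanSpace ℝ (Fin d)) (σ : ℝ → ℝ),
        (∀ t, m t = m₀ + ((β * (Real.tanh (β * t + t₀) - Real.tanh t₀)) / ‖α‖ ^ 2) • α) →
        (∀ t, σ t = β / (‖α‖ * Real.cosh (β * t + t₀))) →
        m 0 = m₀ ∧ m 1 = m₁ ∧ σ 0 = σ₀ ∧ σ 1 = σ₁) ∧
      β = |Real.log ((‖m₁ - m₀‖ ^ 2 + σ₀ ^ 2 + σ₁ ^ 2 -
              Real.sqrt ((‖m₁ - m₀‖ ^ 2 + σ₀ ^ 2 + σ₁ ^ 2) ^ 2 - 4 * σ₀ ^ 2 * σ₁ ^ 2)) /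
            (2 * σ₀ * σ₁))| ∧
      (1 / 2) * β ^ 2
        = (1 / 2) * |Real.log ((‖m₁ - m₀‖ ^ 2 + σ₀ ^ 2 + σ₁ ^ 2 -
              Real.sqrt ((‖m₁ - m₀‖ ^ 2 + σ₀ ^ 2 + σ₁ ^ 2) ^ 2 - 4 * σ₀ ^ 2 * σ₁ ^ 2)) /
            (2 * σ₀ * σ₁))| ^ 2 := by
  have hP : 0 < 2 * σ₀ * σ₁ := by positivity
  have hPS : 2 * σ₀ * σ₁ < ‖m₁ - m₀‖ ^ 2 + σ₀ ^ 2 + σ₁ ^ 2 := by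
    nlinarith [sq_nonneg (σ₀ - σ₁)]
  rw [show 4 * σ₀ ^ 2 * σ₁ ^ 2 = (2 * σ₀ * σ₁) ^ 2 by ring]
  have hβ := abs_log_sub_sqrt_pos hP hPS
  have hcosh := cosh_abs_log_sub_sqrt hP hPS
  rw [eq_div_iff hP.ne', mul_comm] at hcosh
  obtain ⟨t₀, α, hα, hm₁, hσ₀', hσ₁'⟩ := exists_curves_through_endpoints hn hσ₀ hσ₁ hβ hcosh
  refine ⟨_, t₀, α, hβ, hα, fun m σ hm hσ => ?_, rfl, rfl⟩
  rw [hm, hm, hσ, hσ]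
  exact ⟨momentCurve_zero .., hm₁, hσ₀', hσ₁'⟩

/-- Boundary-value solvability and value of the variance-modulated moment problem. -/
theorem stmt2 (d : ℕ) (hd : 1 ≤ d) (m₀ m₁ : EuclideanSpace ℝ (Fin d))
    (hn : 0 < ‖m₁ - m₀‖) (σ₀ σ₁ : ℝ) (hσ₀ : 0 < σ₀) (hσ₁ : 0 < σ₁) :
    ∃ (β t₀ : ℝ) (α : EuclideanSpace ℝ (Fin d)), 0 < β ∧ α ≠ 0 ∧
      (∀ (m : ℝ → EuclideanSpace ℝ (Fin d)) (σ : ℝ → ℝ),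
        (∀ t, m t = m₀ + ((β * (Real.tanh (β * t + t₀) - Real.tanh t₀)) / ‖α‖ ^ 2) • α) →
        (∀ t, σ t = β / (‖α‖ * Real.cosh (β * t + t₀))) →
        m 0 = m₀ ∧ m 1 = m₁ ∧ σ 0 = σ₀ ∧ σ 1 = σ₁) ∧
      β = |Real.log ((‖m₁ - m₀‖ ^ 2 + σ₀ ^ 2 + σ₁ ^ 2 -
              Real.sqrt ((‖m₁ - m₀‖ ^ 2 + σ₀ ^ 2 + σ₁ ^ 2) ^ 2 - 4 * σ₀ ^ 2 * σ₁ ^ 2)) /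
            (2 * σ₀ * σ₁))| ∧
      (1 / 2) * β ^ 2
        = (1 / 2) * |Real.log ((‖m₁ - m₀‖ ^ 2 + σ₀ ^ 2 + σ₁ ^ 2 -
              Real.sqrt ((‖m₁ - m₀‖ ^ 2 + σ₀ ^ 2 + σ₁ ^ 2) ^ 2 - 4 * σ₀ ^ 2 * σ₁ ^ 2)) /
            (2 * σ₀ * σ₁))| ^ 2 :=
  stmt2_general d m₀ m₁ hn σ₀ σ₁ hσ₀ hσ₁
end

section
/- Conservation of the action density along moment geodesics: Let d ≥ 1, α ∈ ℝ^d, let m : ℝ → ℝ^d be differentiable and C : ℝ → d×d real matrices be twice differentiable with C(t) symmetric positive definite for every t, and suppose the Euler–Lagrange system holds: m'(t) = C(t) α and C''(t) = C'(t) C(t)⁻¹ C'(t) − 2 C(t) (α αᵀ) C(t) for all t, where α αᵀ is the rank-one matrix with entries αᵢ αⱼ. Then the function t ↦ ⟨m'(t), C(t)⁻¹ m'(t)⟩ + ¼ trace( C'(t) C(t)⁻¹ C'(t) C(t)⁻¹ ) is constant on ℝ. -/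
open Matrix

attribute [local instance] Matrix.normedAddCommGroup Matrix.normedSpace

/-! With `m' = C α` the density equals `tr (C ααᵀ) + ¼ tr (C' C⁻¹ C' C⁻¹)`. Differentiating,
using `(C⁻¹)' = -C⁻¹ C' C⁻¹` and cyclicity of the trace, the second term contributes
`½ tr (C'' C⁻¹ C' C⁻¹) - ½ tr ((C' C⁻¹)³)`; inserting the Euler–Lagrange equation for `C''`
the cubic terms cancel and what remains is `-tr (C' ααᵀ)`, exactly cancelling the derivative
of the first term. -/

section MatrixCalculus

variable {𝕜 n : Type*} [NontriviallyNormedField 𝕜] [Fintype n]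
  {A B : 𝕜 → Matrix n n 𝕜} {A' B' : Matrix n n 𝕜} {t : 𝕜}

theorem DifferentiableAt.matrix_det [DecidableEq n] (hA : DifferentiableAt 𝕜 A t) :
    DifferentiableAt 𝕜 (fun s => (A s).det) t := by
  have h : ∀ i j, DifferentiableAt 𝕜 (fun s => A s i j) t := fun i j =>
    differentiableAt_pi.mp (differentiableAt_pi.mp hA i) j
  simp only [det_apply']
  fun_prop

theorem DifferentiableAt.matrix_adjugate [DecidableEq n] (hA : DifferentiableAt 𝕜 A t) :
    DifferentiableAt 𝕜 (fun s => (A s).adjugate) t := by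
  refine differentiableAt_pi.mpr fun i => differentiableAt_pi.mpr fun j => ?_
  simp only [adjugate_apply]
  refine DifferentiableAt.matrix_det (differentiableAt_pi.mpr fun k => ?_)
  by_cases hk : k = j
  · subst hk
    simp only [updateRow_self]
    fun_prop
  · simp only [updateRow_ne hk]
    exact differentiableAt_pi.mp hA k

variable [CompleteSpace 𝕜]

theorem HasDerivAt.matrix_trace (hA : HasDerivAt A A' t) :
    HasDerivAt (fun s => (A s).trace) A'.trace t :=
  (traceLinearMap n 𝕜 𝕜).toContinuousLinearMap.hasFDerivAt.comp_hasDerivAt t hA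

theorem HasDerivAt.matrix_mul (hA : HasDerivAt A A' t) (hB : HasDerivAt B B' t) :
    HasDerivAt (fun s => A s * B s) (A' * B t + A t * B') t := by
  rw [add_comm]
  exact (LinearMap.mul 𝕜 (Matrix n n 𝕜)).toContinuousBilinearMap.hasDerivAt_of_bilinear
    (fun _ => hA) (fun _ => hB)

open Filter Topology in
theorem HasDerivAt.matrix_inv [DecidableEq n] (hA : HasDerivAt A A' t) (ht : IsUnit (A t).det) :
    HasDerivAt (fun s => (A s)⁻¹) (-((A t)⁻¹ * A' * (A t)⁻¹)) t := by
  have hdiff : DifferentiableAt 𝕜 (fun s => (A s)⁻¹) t := by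
    have hadj : (fun s => (A s)⁻¹) = fun s => ((A s).det)⁻¹ • (A s).adjugate :=
      funext fun s => by rw [inv_def, Ring.inverse_eq_inv']
    rw [hadj]
    exact (hA.differentiableAt.matrix_det.inv ht.ne_zero).smul hA.differentiableAt.matrix_adjugate
  set D := _root_.deriv (fun s => (A s)⁻¹) t
  -- differentiate `A⁻¹ * A = 1`, valid near `t` since the determinant is continuous
  have hone : (fun s => (A s)⁻¹ * A s) =ᶠ[𝓝 t] fun _ => 1 := by
    filter_upwards [hA.differentiableAt.matrix_det.continuousAt.eventually_ne ht.ne_zero]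
      with s hs using nonsing_inv_mul _ hs.isUnit
  have hsum : D * A t + (A t)⁻¹ * A' = 0 :=
    (hdiff.hasDerivAt.matrix_mul hA).unique ((hasDerivAt_const t 1).congr_of_eventuallyEq hone)
  have hD : D = -((A t)⁻¹ * A' * (A t)⁻¹) :=
    calc D = (D * A t + (A t)⁻¹ * A') * (A t)⁻¹ - (A t)⁻¹ * A' * (A t)⁻¹ := by
          rw [add_mul, mul_assoc, mul_nonsing_inv _ ht, mul_one, add_sub_cancel_right]
      _ = -((A t)⁻¹ * A' * (A t)⁻¹) := by rw [hsum, zero_mul, zero_sub]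
  exact hD ▸ hdiff.hasDerivAt

end MatrixCalculus

section ActionDensity

variable {n : Type*} [Fintype n] [DecidableEq n]

theorem dotProduct_inv_mulVec_eq_trace_mul_vecMulVec {C : Matrix n n ℝ} (hC : IsUnit C.det)
    (α : n → ℝ) : (C *ᵥ α) ⬝ᵥ (C⁻¹ *ᵥ (C *ᵥ α)) = trace (C * vecMulVec α α) := by
  rw [mulVec_mulVec, nonsing_inv_mul _ hC, one_mulVec, ← trace_vecMulVec, mul_vecMulVec]

/-- The product-rule derivative of `tr (A W A W)`, with `A' = A W A - 2 B Q B` and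
`W' = -W A W`, where `W = B⁻¹`. -/
theorem trace_derivative_of_eulerLagrange {R : Type*} [CommRing R] {A B W Q : Matrix n n R}
    (hBW : B * W = 1) (hWB : W * B = 1) :
    trace ((((A * W * A - 2 * (B * Q * B)) * W + A * -(W * A * W)) * A
        + A * W * (A * W * A - 2 * (B * Q * B))) * W + A * W * A * -(W * A * W))
      = -(4 * trace (A * Q)) := by
  have hexpand : (((A * W * A - 2 * (B * Q * B)) * W + A * -(W * A * W)) * A
        + A * W * (A * W * A - 2 * (B * Q * B))) * W + A * W * A * -(W * A * W)
      = -(2 • (B * Q * B * W * A * W + A * W * B * Q * B * W)) := by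
    noncomm_ring
  have hleft : trace (B * Q * B * W * A * W) = trace (A * Q) := by
    rw [show B * Q * B * W * A * W = B * Q * (B * W) * A * W by noncomm_ring, hBW, mul_one,
      trace_mul_comm, show W * (B * Q * A) = W * B * Q * A by noncomm_ring, hWB, one_mul,
      trace_mul_comm]
  have hright : trace (A * W * B * Q * B * W) = trace (A * Q) := by
    rw [show A * W * B * Q * B * W = A * (W * B) * Q * (B * W) by noncomm_ring, hWB, hBW,
      mul_one, mul_one]
  rw [hexpand, trace_neg, trace_smul, trace_add, hleft, hright]
  ring

theorem hasDerivAt_zero_of_eulerLagrange (α : n → ℝ) {C C' : ℝ → Matrix n n ℝ}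
    {C'' : Matrix n n ℝ} {t : ℝ} (hdet : IsUnit (C t).det)
    (hC : HasDerivAt C (C' t) t) (hC' : HasDerivAt C' C'' t)
    (hEL : C'' = C' t * (C t)⁻¹ * C' t - 2 * (C t * vecMulVec α α * C t)) :
    HasDerivAt (fun s => trace (C s * vecMulVec α α)
      + (1 / 4) * trace (C' s * (C s)⁻¹ * C' s * (C s)⁻¹)) 0 t := by
  have hinv := hC.matrix_inv hdet
  have hlinear := (hC.matrix_mul (hasDerivAt_const t (vecMulVec α α))).matrix_trace
  have hquartic := (((hC'.matrix_mul hinv).matrix_mul hC').matrix_mul hinv).matrix_trace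
  refine (hlinear.add (hquartic.const_mul (1 / 4))).congr_deriv ?_
  rw [hEL, trace_derivative_of_eulerLagrange (mul_nonsing_inv _ hdet) (nonsing_inv_mul _ hdet)]
  simp only [mul_zero, add_zero]
  ring

end ActionDensity

theorem stmt15_general (d : ℕ) (α : Fin d → ℝ)
    (C C' C'' : ℝ → Matrix (Fin d) (Fin d) ℝ)
    (hCpos : ∀ t, (C t).PosDef)
    (hC : ∀ t, HasDerivAt C (C' t) t)
    (hC' : ∀ t, HasDerivAt C' (C'' t) t)
    (hEL : ∀ t, C'' t = C' t * (C t)⁻¹ * C' t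
        - 2 * (C t * Matrix.vecMulVec α α * C t)) :
    ∃ k : ℝ, ∀ t : ℝ,
      (C t *ᵥ α) ⬝ᵥ ((C t)⁻¹ *ᵥ (C t *ᵥ α))
        + (1 / 4) * Matrix.trace (C' t * (C t)⁻¹ * C' t * (C t)⁻¹) = k := by
  have hdet : ∀ t, IsUnit (C t).det := fun t => (isUnit_iff_isUnit_det _).mp (hCpos t).isUnit
  set f : ℝ → ℝ := fun s => trace (C s * vecMulVec α α)
    + (1 / 4) * trace (C' s * (C s)⁻¹ * C' s * (C s)⁻¹)
  have hderiv : ∀ t, HasDerivAt f 0 t := fun t =>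
    hasDerivAt_zero_of_eulerLagrange α (hdet t) (hC t) (hC' t) (hEL t)
  refine ⟨f 0, fun t => ?_⟩
  rw [dotProduct_inv_mulVec_eq_trace_mul_vecMulVec (hdet t)]
  exact is_const_of_deriv_eq_zero (fun s => (hderiv s).differentiableAt)
    (fun s => (hderiv s).deriv) t 0

/-- Conservation of the action density along moment geodesics: if `m' = C α` and
`C'' = C' C⁻¹ C' - 2 C (α αᵀ) C`, then `⟨m', C⁻¹ m'⟩ + ¼ tr(C' C⁻¹ C' C⁻¹)` is constant. -/
theorem stmt15 (d : ℕ) (hd : 1 ≤ d) (α : Fin d → ℝ)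
    (m : ℝ → (Fin d → ℝ)) (C C' C'' : ℝ → Matrix (Fin d) (Fin d) ℝ)
    (hCpos : ∀ t, (C t).PosDef)
    (hm : ∀ t, HasDerivAt m (C t *ᵥ α) t)
    (hC : ∀ t, HasDerivAt C (C' t) t)
    (hC' : ∀ t, HasDerivAt C' (C'' t) t)
    (hEL : ∀ t, C'' t = C' t * (C t)⁻¹ * C' t
        - 2 * (C t * Matrix.vecMulVec α α * C t)) :
    ∃ k : ℝ, ∀ t : ℝ,
      (C t *ᵥ α) ⬝ᵥ ((C t)⁻¹ *ᵥ (C t *ᵥ α))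
        + (1 / 4) * Matrix.trace (C' t * (C t)⁻¹ * C' t * (C t)⁻¹) = k :=
  stmt15_general d α C C' C'' hCpos hC hC' hEL
end
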